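/- Bridging-domain adaptation bound (population version): Let h_1 minimize ε_S over H, h_T* minimize ε_T over H, h_B* minimize ε_B over H, γ_1 = min_h {ε_T(h) + (1/2)ε_S(h) + (1/2)ε_B(h)}, γ_2 = min_h {ε_B(h) + ε_S(h)}, and D_α = (1/2)D_S + (1/2)D_B. Then ε_T(h_1) ≤ ε_T(h_T*) + (1/2)ε_B(h_B*) + 2γ_1 + γ_2 + d_{H∆H}(D_α, D_T) + (1/2) d_{H∆H}(D_S, D_B). -/

import Mathlib

open MeasureTheory

/-- Probability that two hypotheses disagree under `D`. -/
noncomputable def errP {X : Type*} [MeasurableSpace X] (D : Measure X)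
    (h h' : X → Bool) : ℝ :=
  (D {x | h x ≠ h' x}).toReal

/-- Error of hypothesis `h` against labeling function `f` under `D`. -/
noncomputable def errL {X : Type*} [MeasurableSpace X] (D : Measure X)
    (f h : X → Bool) : ℝ :=
  (D {x | h x ≠ f x}).toReal

/-- The `H∆H`-divergence between two measures. -/
noncomputable def dHH {X : Type*} [MeasurableSpace X] (H : Set (X → Bool))
    (D₁ D₂ : Measure X) : ℝ :=
  2 * sSup ((fun p : (X → Bool) × (X → Bool) =>
      |errP D₁ p.1 p.2 - errP D₂ p.1 p.2|) '' (H ×ˢ H))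

/-!
Two `H∆H` transfers, each at the cost of half a divergence. Comparing `h₁` with the minimiser
`h₂` of `γ₁` moves the target error to the mixture `D_α`, where the disagreement of `h₁` and `h₂`
is at most the sum of their source and bridge errors; this leaves `γ₁ + ε_S(h₁)/2 + ε_B(h₁)/2`.
Comparing `h₁` with the minimiser `h₃` of `γ₂` moves `ε_B(h₁)` to the source in the same way.
Since `h₁` minimises `ε_S`, the leftover source errors are absorbed by `γ₁` and `γ₂`.
-/

open scoped ENNReal

section Disagreement

variable {X : Type*} [MeasurableSpace X]

lemma errL_nonneg (D : Measure X) (f h : X → Bool) : 0 ≤ errL D f h :=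
  ENNReal.toReal_nonneg

lemma errL_le_errL_add_errP (D : Measure X) [IsFiniteMeasure D] (f h h' : X → Bool) :
    errL D f h ≤ errL D f h' + errP D h h' := by
  simp only [errL, errP, ← measureReal_def]
  calc D.real {x | h x ≠ f x}
      ≤ D.real ({x | h' x ≠ f x} ∪ {x | h x ≠ h' x}) :=
        measureReal_mono fun x hx => by grind
    _ ≤ _ := measureReal_union_le _ _

lemma errP_le_errL_add_errL (D : Measure X) [IsFiniteMeasure D] (f h h' : X → Bool) :
    errP D h h' ≤ errL D f h + errL D f h' := by
  simp only [errL, errP, ← measureReal_def]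
  calc D.real {x | h x ≠ h' x}
      ≤ D.real ({x | h x ≠ f x} ∪ {x | h' x ≠ f x}) :=
        measureReal_mono fun x hx => by grind
    _ ≤ _ := measureReal_union_le _ _

lemma errP_add (D₁ D₂ : Measure X) [IsFiniteMeasure D₁] [IsFiniteMeasure D₂]
    (h h' : X → Bool) : errP (D₁ + D₂) h h' = errP D₁ h h' + errP D₂ h h' :=
  measureReal_add_apply

lemma errP_smul (c : ℝ≥0∞) (D : Measure X) (h h' : X → Bool) :
    errP (c • D) h h' = c.toReal * errP D h h' :=
  measureReal_ennreal_smul_apply c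

end Disagreement

section Divergence

variable {X : Type*} [MeasurableSpace X] (H : Set (X → Bool))

lemma dHH_nonneg (D₁ D₂ : Measure X) : 0 ≤ dHH H D₁ D₂ :=
  mul_nonneg zero_le_two <| Real.sSup_nonneg <| by
    rintro _ ⟨p, -, rfl⟩
    exact abs_nonneg _

lemma bddAbove_abs_errP_sub (D₁ D₂ : Measure X) [IsFiniteMeasure D₁] [IsFiniteMeasure D₂] :
    BddAbove ((fun p : (X → Bool) × (X → Bool) =>
      |errP D₁ p.1 p.2 - errP D₂ p.1 p.2|) '' (H ×ˢ H)) := by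
  refine ⟨D₁.real Set.univ + D₂.real Set.univ, ?_⟩
  rintro _ ⟨p, -, rfl⟩
  calc |errP D₁ p.1 p.2 - errP D₂ p.1 p.2| ≤ |errP D₁ p.1 p.2| + |errP D₂ p.1 p.2| := abs_sub _ _
    _ ≤ D₁.real Set.univ + D₂.real Set.univ := by
      simp only [errP, ← measureReal_def, abs_of_nonneg measureReal_nonneg]
      exact add_le_add (measureReal_mono (Set.subset_univ _)) (measureReal_mono (Set.subset_univ _))

lemma errP_le_errP_add_half_dHH (D₁ D₂ : Measure X) [IsFiniteMeasure D₁] [IsFiniteMeasure D₂]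
    {g g' : X → Bool} (hg : g ∈ H) (hg' : g' ∈ H) :
    errP D₂ g g' ≤ errP D₁ g g' + dHH H D₁ D₂ / 2 := by
  have hle : |errP D₁ g g' - errP D₂ g g'| ≤ dHH H D₁ D₂ / 2 := by
    rw [dHH, mul_div_cancel_left₀ _ two_ne_zero]
    exact le_csSup (bddAbove_abs_errP_sub H D₁ D₂) ⟨(g, g'), Set.mk_mem_prod hg hg', rfl⟩
  linarith [neg_abs_le (errP D₁ g g' - errP D₂ g g')]

variable (D₁ D₂ : Measure X) [IsFiniteMeasure D₁] [IsFiniteMeasure D₂]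

lemma errL_le_errL_add_errP_add_half_dHH (f : X → Bool) {h h' : X → Bool}
    (hh : h ∈ H) (hh' : h' ∈ H) :
    errL D₂ f h ≤ errL D₂ f h' + errP D₁ h h' + dHH H D₁ D₂ / 2 := by
  linarith [errL_le_errL_add_errP D₂ f h h', errP_le_errP_add_half_dHH H D₁ D₂ hh hh']

lemma errL_le_errL_add_errL_add_half_dHH (f₁ f₂ : X → Bool) {h h' : X → Bool}
    (hh : h ∈ H) (hh' : h' ∈ H) :
    errL D₂ f₂ h ≤ errL D₂ f₂ h' + (errL D₁ f₁ h + errL D₁ f₁ h') + dHH H D₁ D₂ / 2 := by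
  linarith [errL_le_errL_add_errP_add_half_dHH H D₁ D₂ f₂ hh hh',
    errP_le_errL_add_errL D₁ f₁ h h']

lemma errL_le_errL_add_mixture_errL_add_half_dHH (D : Measure X) [IsFiniteMeasure D]
    (f₁ f₂ f : X → Bool) {a b : ℝ≥0∞} (ha : a ≠ ∞) (hb : b ≠ ∞) {h h' : X → Bool}
    (hh : h ∈ H) (hh' : h' ∈ H) :
    errL D f h ≤ errL D f h' + a.toReal * (errL D₁ f₁ h + errL D₁ f₁ h')
      + b.toReal * (errL D₂ f₂ h + errL D₂ f₂ h') + dHH H (a • D₁ + b • D₂) D / 2 := by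
  have := D₁.smul_finite ha
  have := D₂.smul_finite hb
  calc errL D f h ≤ errL D f h' + errP (a • D₁ + b • D₂) h h' + dHH H (a • D₁ + b • D₂) D / 2 :=
        errL_le_errL_add_errP_add_half_dHH H _ D f hh hh'
    _ = errL D f h' + a.toReal * errP D₁ h h' + b.toReal * errP D₂ h h'
          + dHH H (a • D₁ + b • D₂) D / 2 := by
        rw [errP_add, errP_smul, errP_smul]; ring
    _ ≤ _ := by
        gcongr
        exacts [errP_le_errL_add_errL D₁ f₁ h h', errP_le_errL_add_errL D₂ f₂ h h']

end Divergence

theorem bridging_adaptation_bound_general {X : Type*} [MeasurableSpace X]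
    (D_S D_B D_T : Measure X)
    [IsProbabilityMeasure D_S] [IsProbabilityMeasure D_B] [IsProbabilityMeasure D_T]
    (f_S f_B f_T : X → Bool)
    (H : Set (X → Bool))
    (h₁ hT hB : X → Bool) (hh₁ : h₁ ∈ H)
    (h₁min : ∀ h ∈ H, errL D_S f_S h₁ ≤ errL D_S f_S h)
    (γ₁ γ₂ : ℝ)
    (hγ₁ : IsLeast ((fun h => errL D_T f_T h + (1/2) * errL D_S f_S h
        + (1/2) * errL D_B f_B h) '' H) γ₁)
    (hγ₂ : IsLeast ((fun h => errL D_B f_B h + errL D_S f_S h) '' H) γ₂) :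
    errL D_T f_T h₁ ≤ errL D_T f_T hT + (1/2) * errL D_B f_B hB
      + 2 * γ₁ + γ₂
      + dHH H ((1/2 : ENNReal) • D_S + (1/2 : ENNReal) • D_B) D_T
      + (1/2) * dHH H D_S D_B := by
  obtain ⟨h₂, hh₂, rfl⟩ := hγ₁.1
  obtain ⟨h₃, hh₃, rfl⟩ := hγ₂.1
  have hT_mix := errL_le_errL_add_mixture_errL_add_half_dHH H D_S D_B D_T f_S f_B f_T
    (a := 1/2) (b := 1/2) (by norm_num) (by norm_num) hh₁ hh₂
  have hB_src := errL_le_errL_add_errL_add_half_dHH H D_S D_B f_S f_B hh₁ hh₃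
  rw [show (1/2 : ℝ≥0∞).toReal = 1/2 by norm_num] at hT_mix
  linarith [h₁min h₂ hh₂, h₁min h₃ hh₃, errL_nonneg D_T f_T h₂, errL_nonneg D_B f_B h₂,
    errL_nonneg D_B f_B h₃, errL_nonneg D_T f_T hT, errL_nonneg D_B f_B hB,
    dHH_nonneg H ((1/2 : ℝ≥0∞) • D_S + (1/2 : ℝ≥0∞) • D_B) D_T, dHH_nonneg H D_S D_B]

theorem bridging_adaptation_bound {X : Type*} [MeasurableSpace X]
    (D_S D_B D_T : Measure X)
    [IsProbabilityMeasure D_S] [IsProbabilityMeasure D_B] [IsProbabilityMeasure D_T]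
    (f_S f_B f_T : X → Bool)
    (mfS : Measurable f_S) (mfB : Measurable f_B) (mfT : Measurable f_T)
    (H : Set (X → Bool)) (hmeas : ∀ g ∈ H, Measurable g)
    (h₁ hT hB : X → Bool) (hh₁ : h₁ ∈ H) (hhT : hT ∈ H) (hhB : hB ∈ H)
    (h₁min : ∀ h ∈ H, errL D_S f_S h₁ ≤ errL D_S f_S h)
    (hTmin : ∀ h ∈ H, errL D_T f_T hT ≤ errL D_T f_T h)
    (hBmin : ∀ h ∈ H, errL D_B f_B hB ≤ errL D_B f_B h)
    (γ₁ γ₂ : ℝ)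
    (hγ₁ : IsLeast ((fun h => errL D_T f_T h + (1/2) * errL D_S f_S h
        + (1/2) * errL D_B f_B h) '' H) γ₁)
    (hγ₂ : IsLeast ((fun h => errL D_B f_B h + errL D_S f_S h) '' H) γ₂) :
    errL D_T f_T h₁ ≤ errL D_T f_T hT + (1/2) * errL D_B f_B hB
      + 2 * γ₁ + γ₂
      + dHH H ((1/2 : ENNReal) • D_S + (1/2 : ENNReal) • D_B) D_T
      + (1/2) * dHH H D_S D_B :=
  bridging_adaptation_bound_general D_S D_B D_T f_S f_B f_T H h₁ hT hB hh₁ h₁min γ₁ γ₂ hγ₁ hγ₂
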